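/- arXiv:1706.00440 — 4 statements merged into one kernel-verified Lean document; each statement's English description precedes it below -/
import Mathlib

section
/- The function g(x) = (x+1)·ln(x+1) - x·ln x satisfies the asymptotic expansion g(ν - 1/2) = ln ν + 1 + O(1/ν²) as ν → ∞; precisely, ν²·|g(ν - 1/2) - ln ν - 1| is bounded for ν sufficiently large. -/
/-!
With `t = 1/(2ν)` we have `ν ∓ 1/2 = ν(1 ∓ t)`, and pulling `log ν` out of both terms gives
`g(ν - 1/2) = log ν + ν·φ(t)` with `φ(t) = (1+t)·log(1+t) - (1-t)·log(1-t)`.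
The second-order Taylor bounds for `log(1 ± t)` give `φ(t) = 2t + O(t³)`, and `2νt = 1`,
so `g(ν - 1/2) - log ν - 1 = ν·(φ(t) - 2t) = O(ν·t³) = O(1/ν²)`.
-/

open Real

lemma abs_log_one_sub_add_le {x : ℝ} (hx : |x| ≤ 1 / 2) :
    |log (1 - x) + x + x ^ 2 / 2| ≤ 2 * |x| ^ 3 := by
  have h := abs_log_sub_add_sum_range_le (by linarith : |x| < 1) 2
  norm_num [Finset.sum_range_succ] at h
  calc |log (1 - x) + x + x ^ 2 / 2| = |x + x ^ 2 / 2 + log (1 - x)| := by ring_nf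
    _ ≤ |x| ^ 3 / (1 - |x|) := h
    _ ≤ 2 * |x| ^ 3 := by
      rw [div_le_iff₀ (by linarith)]
      nlinarith [pow_nonneg (abs_nonneg x) 3]

lemma abs_mul_log_one_add_sub_mul_log_one_sub_sub_le {t : ℝ} (h0 : 0 ≤ t) (h2 : t ≤ 1 / 2) :
    |(1 + t) * log (1 + t) - (1 - t) * log (1 - t) - 2 * t| ≤ 6 * t ^ 3 := by
  have hA : |log (1 + t) - t + t ^ 2 / 2| ≤ 2 * t ^ 3 := by
    have h := abs_log_one_sub_add_le (x := -t) (by rw [abs_neg, abs_of_nonneg h0]; exact h2)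
    rwa [sub_neg_eq_add, abs_neg, abs_of_nonneg h0, neg_sq, ← sub_eq_add_neg] at h
  have hB : |log (1 - t) + t + t ^ 2 / 2| ≤ 2 * t ^ 3 := by
    simpa only [abs_of_nonneg h0] using abs_log_one_sub_add_le (x := t) (by rwa [abs_of_nonneg h0])
  set A := log (1 + t) - t + t ^ 2 / 2
  set B := log (1 - t) + t + t ^ 2 / 2
  have hsplit : (1 + t) * log (1 + t) - (1 - t) * log (1 - t) - 2 * t
      = (1 + t) * A - (1 - t) * B - t ^ 3 := by ring
  rw [hsplit]
  calc |(1 + t) * A - (1 - t) * B - t ^ 3|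
      ≤ |(1 + t) * A| + |(1 - t) * B| + |t ^ 3| :=
        (abs_sub _ _).trans (add_le_add_left (abs_sub _ _) _)
    _ = (1 + t) * |A| + (1 - t) * |B| + t ^ 3 := by
      rw [abs_mul, abs_mul, abs_of_pos (by linarith : 0 < 1 + t),
        abs_of_pos (by linarith : 0 < 1 - t), abs_of_nonneg (by positivity : 0 ≤ t ^ 3)]
    _ ≤ 3 / 2 * (2 * t ^ 3) + 1 * (2 * t ^ 3) + t ^ 3 := by gcongr <;> linarith
    _ = 6 * t ^ 3 := by ring

/-- With `g(x) = (x+1)·ln(x+1) - x·ln x`, the asymptotic expansion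
`g(ν - 1/2) = ln ν + 1 + O(1/ν²)` holds as `ν → ∞`: the quantity
`ν²·|g(ν - 1/2) - ln ν - 1|` is bounded for `ν` sufficiently large. -/
theorem g_asymptotic (g : ℝ → ℝ)
    (hg : ∀ x > (0:ℝ), g x = (x + 1) * Real.log (x + 1) - x * Real.log x) :
    ∃ C ν₀ : ℝ, ∀ ν ≥ ν₀, ν ^ 2 * |g (ν - 1/2) - Real.log ν - 1| ≤ C := by
  refine ⟨1, 1, fun ν hν => ?_⟩
  have hν0 : 0 < ν := by linarith
  set t := 1 / (2 * ν)
  have hνt : ν * t = 1 / 2 := by simp only [t]; field_simp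
  have ht0 : 0 ≤ t := by positivity
  have ht2 : t ≤ 1 / 2 := by rw [div_le_div_iff₀ (by positivity) two_pos]; linarith
  have hg_scaled :
      g (ν - 1/2) = ν * (1 + t) * log (ν * (1 + t)) - ν * (1 - t) * log (ν * (1 - t)) := by
    rw [hg _ (by linarith), show ν - 1/2 + 1 = ν * (1 + t) by linarith,
      show ν - 1/2 = ν * (1 - t) by linarith]
  have key : g (ν - 1/2) - log ν - 1
      = ν * ((1 + t) * log (1 + t) - (1 - t) * log (1 - t) - 2 * t) := by
    rw [hg_scaled, log_mul hν0.ne' (by linarith), log_mul hν0.ne' (by linarith)]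
    linear_combination (2 * (log ν + 1)) * hνt
  rw [key, abs_mul, abs_of_pos hν0]
  calc ν ^ 2 * (ν * |(1 + t) * log (1 + t) - (1 - t) * log (1 - t) - 2 * t|)
      ≤ ν ^ 3 * (6 * t ^ 3) := by
        rw [← mul_assoc, ← pow_succ]
        gcongr
        exact abs_mul_log_one_add_sub_mul_log_one_sub_sub_le ht0 ht2
    _ = 6 * (ν * t) ^ 3 := by ring
    _ ≤ 1 := by rw [hνt]; norm_num
end

section
/- For any t > 0 and ν ≥ 1/2, the two symplectic eigenvalues ν±(ν,t) = (1/2)·√(4νt ± 2t·√(4νt + t² + 1) + 2t² + 1) both satisfy ν±(ν,t) = √(νt) + O(1) as ν → ∞; precisely, |ν±(ν,t) - √(νt)| is bounded uniformly in ν ≥ 1/2 for each fixed t. -/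
/-!
With `s = √(4νt + t² + 1)`, both radicands are perfect squares: `4νt ± 2ts + 2t² + 1 = (s ± t)²`,
and `s ≥ |t|`, so `ν± = (s ± t) / 2`. Since `2√(νt) = √(4νt) ≤ s ≤ √(4νt) + √(t² + 1)`, both
eigenvalues stay within `(√(t² + 1) + t) / 2` of `√(νt)`.
-/

theorem sqrt_add_le_add_sqrt {x y : ℝ} (hx : 0 ≤ x) (hy : 0 ≤ y) : √(x + y) ≤ √x + √y := by
  rw [Real.sqrt_le_left (by positivity)]
  nlinarith [Real.sq_sqrt hx, Real.sq_sqrt hy, Real.sqrt_nonneg x, Real.sqrt_nonneg y]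

theorem abs_le_sqrt_add_sq_add_one {b : ℝ} (hb : -1 ≤ b) (t : ℝ) : |t| ≤ √(b + t ^ 2 + 1) :=
  Real.abs_le_sqrt (by linarith)

theorem sqrt_add_two_mul_sqrt_eq {b : ℝ} (hb : -1 ≤ b) (t : ℝ) :
    √(b + 2 * t * √(b + t ^ 2 + 1) + 2 * t ^ 2 + 1) = √(b + t ^ 2 + 1) + t := by
  have hs := Real.sq_sqrt (show 0 ≤ b + t ^ 2 + 1 by nlinarith)
  have ht := abs_le_sqrt_add_sq_add_one hb t
  rw [← Real.sqrt_sq (show 0 ≤ √(b + t ^ 2 + 1) + t by linarith [neg_abs_le t])]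
  congr 1
  linear_combination -hs

theorem sqrt_sub_two_mul_sqrt_eq {b : ℝ} (hb : -1 ≤ b) (t : ℝ) :
    √(b - 2 * t * √(b + t ^ 2 + 1) + 2 * t ^ 2 + 1) = √(b + t ^ 2 + 1) - t := by
  have hs := Real.sq_sqrt (show 0 ≤ b + t ^ 2 + 1 by nlinarith)
  have ht := abs_le_sqrt_add_sq_add_one hb t
  rw [← Real.sqrt_sq (show 0 ≤ √(b + t ^ 2 + 1) - t by linarith [le_abs_self t])]
  congr 1
  linear_combination -hs

/-- For fixed `t > 0`, the two symplectic eigenvalues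
`ν±(ν,t) = (1/2)·√(4νt ± 2t·√(4νt + t² + 1) + 2t² + 1)` satisfy
`ν±(ν,t) = √(νt) + O(1)`: the differences `|ν±(ν,t) - √(νt)|` are bounded
uniformly in `ν ≥ 1/2`. -/
theorem symplectic_eigenvalues_asymp (t : ℝ) (ht : 0 < t) :
    ∃ C : ℝ, ∀ ν : ℝ, 1/2 ≤ ν →
      |(1/2) * Real.sqrt (4*ν*t + 2*t*Real.sqrt (4*ν*t + t^2 + 1) + 2*t^2 + 1)
          - Real.sqrt (ν*t)| ≤ C ∧
      |(1/2) * Real.sqrt (4*ν*t - 2*t*Real.sqrt (4*ν*t + t^2 + 1) + 2*t^2 + 1)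
          - Real.sqrt (ν*t)| ≤ C := by
  refine ⟨(√(t ^ 2 + 1) + t) / 2, fun ν hν => ?_⟩
  have hb : 0 ≤ 4 * ν * t := by nlinarith
  rw [sqrt_add_two_mul_sqrt_eq (by linarith) t, sqrt_sub_two_mul_sqrt_eq (by linarith) t]
  have hdouble : √(4 * ν * t) = 2 * √(ν * t) := by
    rw [mul_assoc, Real.sqrt_mul zero_le_four, show (4 : ℝ) = 2 ^ 2 by norm_num,
      Real.sqrt_sq zero_le_two]
  have hlow : √(4 * ν * t) ≤ √(4 * ν * t + t ^ 2 + 1) := Real.sqrt_le_sqrt (by nlinarith)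
  have hup : √(4 * ν * t + t ^ 2 + 1) ≤ √(4 * ν * t) + √(t ^ 2 + 1) := by
    simpa only [add_assoc] using sqrt_add_le_add_sqrt hb (by positivity : 0 ≤ t ^ 2 + 1)
  rw [hdouble] at hlow hup
  constructor <;> rw [abs_le] <;> constructor <;> linarith [Real.sqrt_nonneg (t ^ 2 + 1)]
end

section
/- For t > 0 and ν ≥ 1/2 with g(x) = (x+1)ln(x+1) - x·ln x, the limit as ν → ∞ of g(ν₊(ν,t) - 1/2) + g(ν₋(ν,t) - 1/2) - g(ν - 1/2) equals ln t + 1, where ν±(ν,t) = (1/2)·√(4νt ± 2t·√(4νt + t² + 1) + 2t² + 1). -/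
/-!
Write `s = √(4νt + t² + 1)`. The radicands of `ν₊` and `ν₋` are the perfect squares
`(s ± t)²`, so the three arguments of `g` are `(s + t - 1)/2`, `(s - t - 1)/2` and `ν - 1/2`,
all tending to infinity. Since `g x = log x + 1 + o(1)`, the expression is
`log (a b / c) + 1 + o(1)` for these arguments `a, b, c`, and using `s² = 4νt + t² + 1` one finds
`a b / c = t - 2t/(s + t + 1)`, which tends to `t`.
-/

open Real Filter Topology

theorem tendsto_add_one_mul_log_add_one_sub_mul_log_sub_log :
    Tendsto (fun x : ℝ => (x + 1) * log (x + 1) - x * log x - log x) atTop (𝓝 1) := by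
  have h_inv : Tendsto (fun x : ℝ => 1 + 1 / x) atTop (𝓝 1) := by
    simpa using (tendsto_const_nhds (x := (1 : ℝ))).add
      ((tendsto_const_nhds (x := (1 : ℝ))).div_atTop tendsto_id)
  have h_log : Tendsto (fun x : ℝ => log (1 + 1 / x)) atTop (𝓝 0) := by
    rw [← log_one]
    exact (continuousAt_log one_ne_zero).tendsto.comp h_inv
  have h_sum := (tendsto_mul_log_one_add_div_atTop 1).add h_log
  rw [add_zero] at h_sum
  refine h_sum.congr' ?_
  filter_upwards [eventually_gt_atTop 0] with x hx
  have : log (1 + 1 / x) = log (x + 1) - log x := by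
    rw [← log_div (by positivity) hx.ne']
    congr 1
    field_simp
  rw [this]
  ring

theorem tendsto_add_sub_of_tendsto_sub_log {α : Type*} {l : Filter α} {f : ℝ → ℝ}
    {c₀ L : ℝ} (hf : Tendsto (fun x => f x - log x) atTop (𝓝 c₀)) {a b c : α → ℝ}
    (ha : Tendsto a l atTop) (hb : Tendsto b l atTop) (hc : Tendsto c l atTop)
    (hL : Tendsto (fun y => a y * b y / c y) l (𝓝 L)) (hL0 : L ≠ 0) :
    Tendsto (fun y => f (a y) + f (b y) - f (c y)) l (𝓝 (log L + c₀)) := by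
  have h_sum := (((hf.comp ha).add (hf.comp hb)).sub (hf.comp hc)).add
    ((continuousAt_log hL0).tendsto.comp hL)
  rw [add_sub_cancel_right, add_comm] at h_sum
  refine h_sum.congr' ?_
  filter_upwards [ha.eventually_gt_atTop 0, hb.eventually_gt_atTop 0,
    hc.eventually_gt_atTop 0] with y hay hby hcy
  simp only [Function.comp_apply]
  rw [log_div (by positivity) hcy.ne', log_mul hay.ne' hby.ne']
  ring

section SymplecticEigenvalues

variable {ν t : ℝ}

theorem sqrt_four_mul_add_two_mul_sqrt (hν : 0 ≤ ν) (ht : 0 ≤ t) :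
    √(4*ν*t + 2*t*√(4*ν*t + t^2 + 1) + 2*t^2 + 1) = √(4*ν*t + t^2 + 1) + t := by
  have hs := sq_sqrt (by positivity : 0 ≤ 4*ν*t + t^2 + 1)
  rw [sqrt_eq_iff_eq_sq (by positivity) (by positivity)]
  linear_combination -hs

theorem sqrt_four_mul_sub_two_mul_sqrt (hν : 0 ≤ ν) (ht : 0 ≤ t) :
    √(4*ν*t - 2*t*√(4*ν*t + t^2 + 1) + 2*t^2 + 1) = √(4*ν*t + t^2 + 1) - t := by
  have hs := sq_sqrt (by positivity : 0 ≤ 4*ν*t + t^2 + 1)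
  have h_le : t ≤ √(4*ν*t + t^2 + 1) :=
    le_sqrt_of_sq_le (by nlinarith [mul_nonneg hν ht])
  rw [sqrt_eq_iff_eq_sq (by nlinarith) (by linarith)]
  linear_combination -hs

theorem mul_div_sub_half_eq_of_sq_eq {s : ℝ} (hs : s ^ 2 = 4*ν*t + t^2 + 1) (ht : t ≠ 0)
    (hν : ν ≠ 1/2) (hst : s + t + 1 ≠ 0) :
    (1/2 * (s + t) - 1/2) * (1/2 * (s - t) - 1/2) / (ν - 1/2) = t - 2 * t / (s + t + 1) := by
  have hν' : ν - 1/2 ≠ 0 := sub_ne_zero.mpr hν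
  rw [div_eq_iff hν']
  have hν_eq : ν = (s^2 - t^2 - 1) / (4*t) := by
    field_simp
    linear_combination -hs
  subst hν_eq
  field_simp
  ring

end SymplecticEigenvalues

/-- For fixed `t > 0` and `g(x) = (x+1)ln(x+1) - x·ln x`, the limit as `ν → ∞` of
`g(ν₊(ν,t) - 1/2) + g(ν₋(ν,t) - 1/2) - g(ν - 1/2)` equals `ln t + 1`, where
`ν±(ν,t) = (1/2)·√(4νt ± 2t·√(4νt + t² + 1) + 2t² + 1)`. -/
theorem conditional_entropy_scaling_gaussian (t : ℝ) (ht : 0 < t)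
    (g : ℝ → ℝ) (hg : ∀ x, g x = (x + 1) * Real.log (x + 1) - x * Real.log x) :
    Tendsto (fun ν : ℝ =>
        g ((1/2) * Real.sqrt (4*ν*t + 2*t*Real.sqrt (4*ν*t + t^2 + 1) + 2*t^2 + 1) - 1/2)
        + g ((1/2) * Real.sqrt (4*ν*t - 2*t*Real.sqrt (4*ν*t + t^2 + 1) + 2*t^2 + 1) - 1/2)
        - g (ν - 1/2))
      atTop (nhds (Real.log t + 1)) := by
  set s : ℝ → ℝ := fun ν => √(4*ν*t + t^2 + 1)
  have hs : Tendsto s atTop atTop := tendsto_sqrt_atTop.comp <|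
    tendsto_atTop_add_const_right _ _ <| tendsto_atTop_add_const_right _ _ <|
      (tendsto_id.const_mul_atTop (by positivity : 0 < 4 * t)).congr fun ν => by
        simp only [id]; ring
  have hg_log : Tendsto (fun x => g x - log x) atTop (𝓝 1) := by
    simpa only [hg] using tendsto_add_one_mul_log_add_one_sub_mul_log_sub_log
  refine tendsto_add_sub_of_tendsto_sub_log hg_log ?_ ?_
    (tendsto_atTop_add_const_right _ _ tendsto_id) ?_ ht.ne'
  · refine ((tendsto_atTop_add_const_right _ (t - 1) hs).atTop_div_const two_pos).congr' ?_
    filter_upwards [eventually_ge_atTop 0] with ν hν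
    rw [sqrt_four_mul_add_two_mul_sqrt hν ht.le]
    ring
  · refine ((tendsto_atTop_add_const_right _ (-t - 1) hs).atTop_div_const two_pos).congr' ?_
    filter_upwards [eventually_ge_atTop 0] with ν hν
    rw [sqrt_four_mul_sub_two_mul_sqrt hν ht.le]
    ring
  · have h_lim : Tendsto (fun ν => t - 2 * t / (s ν + t + 1)) atTop (𝓝 t) := by
      simpa using tendsto_const_nhds.sub <| tendsto_const_nhds.div_atTop <|
        tendsto_atTop_add_const_right _ _ <| tendsto_atTop_add_const_right _ _ hs
    refine h_lim.congr' ?_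
    filter_upwards [eventually_gt_atTop (1/2)] with ν hν
    rw [sqrt_four_mul_add_two_mul_sqrt (by linarith) ht.le,
      sqrt_four_mul_sub_two_mul_sqrt (by linarith) ht.le,
      mul_div_sub_half_eq_of_sq_eq (sq_sqrt (by positivity)) ht.ne' hν.ne' (by positivity)]
end

section
/- Optimality computation for the beam-splitter: for η ∈ [0,1] and a, b > 0, the 6×6 covariance matrix σ⁽ⁿ⁾ with block structure [[n²(η/a + (1-η)/b)·I₂, n√(η(n²/a² - 1))·T, n√((1-η)(n²/b² - 1))·T], [·, (n²/a)·I₂, 0], [·, 0, (n²/b)·I₂]] (symmetric, T = diag(1,-1)) has determinant det σ⁽ⁿ⁾ = (n⁴(ηa + (1-η)b)/(ab))²·(1 + o(1)) as n → ∞; precisely lim_{n→∞} det σ⁽ⁿ⁾ · (ab)²/n⁸(ηa+(1-η)b)² = 1. -/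
/-!
The `6 × 6` determinant is the square of the determinant `c p q - x² q - y² p` of a `3 × 3`
arrow matrix, and for `n ≥ max a b` the latter equals `n⁴ (η a + (1 - η) b) / (a b)` exactly,
so the normalised sequence is eventually constant `1`.
-/

open Real Matrix Filter

/-- Ordering the quadratures as `(x₁, x₂, x₃, p₁, p₂, p₃)` makes the matrix block-diagonal,
with the two `3 × 3` blocks conjugate under `diag(1, -1, -1)`. -/
theorem det_fin_six_eq_sq_arrow_det {R : Type*} [CommRing R] (c p q x y : R) :
    (!![c, 0, x, 0, y, 0;
        0, c, 0, -x, 0, -y;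
        x, 0, p, 0, 0, 0;
        0, -x, 0, p, 0, 0;
        y, 0, 0, 0, q, 0;
        0, -y, 0, 0, 0, q] : Matrix (Fin 6) (Fin 6) R).det
      = (c * p * q - x ^ 2 * q - y ^ 2 * p) ^ 2 := by
  set M : Matrix (Fin 6) (Fin 6) R := !![c, 0, x, 0, y, 0;
        0, c, 0, -x, 0, -y;
        x, 0, p, 0, 0, 0;
        0, -x, 0, p, 0, 0;
        y, 0, 0, 0, q, 0;
        0, -y, 0, 0, 0, q]
  have hblocks : M.submatrix (finProdFinEquiv : Fin 3 × Fin 2 ≃ Fin 6) finProdFinEquiv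
      = blockDiagonal ![!![c, x, y; x, p, 0; y, 0, q], !![c, -x, -y; -x, p, 0; -y, 0, q]] := by
    ext ⟨i, k⟩ ⟨j, l⟩
    fin_cases i <;> fin_cases j <;> fin_cases k <;> fin_cases l <;> rfl
  rw [← det_submatrix_equiv_self (finProdFinEquiv : Fin 3 × Fin 2 ≃ Fin 6) M, hblocks,
    det_blockDiagonal, Fin.prod_univ_two, det_fin_three, det_fin_three]
  simp only [Nat.succ_eq_add_one, Nat.reduceAdd, Fin.isValue, cons_val_zero, of_apply, cons_val',
    cons_val_fin_one, cons_val_one, cons_val, mul_zero, sub_zero, zero_mul, add_zero, mul_neg,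
    neg_mul, neg_neg, neg_zero]
  ring

theorem beamSplitter_arrow_det {η a b t : ℝ} (ha : a ≠ 0) (hb : b ≠ 0)
    (hA : 0 ≤ η * (t ^ 2 / a ^ 2 - 1)) (hB : 0 ≤ (1 - η) * (t ^ 2 / b ^ 2 - 1)) :
    t ^ 2 * (η / a + (1 - η) / b) * (t ^ 2 / a) * (t ^ 2 / b)
        - (t * √(η * (t ^ 2 / a ^ 2 - 1))) ^ 2 * (t ^ 2 / b)
        - (t * √((1 - η) * (t ^ 2 / b ^ 2 - 1))) ^ 2 * (t ^ 2 / a)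
      = t ^ 4 * (η * a + (1 - η) * b) / (a * b) := by
  rw [mul_pow, mul_pow, sq_sqrt hA, sq_sqrt hB]
  field_simp
  ring

theorem sq_div_sq_sub_one_nonneg {a t : ℝ} (ha : 0 < a) (hat : a ≤ t) : 0 ≤ t ^ 2 / a ^ 2 - 1 :=
  sub_nonneg.2 <| (one_le_div (by positivity)).2 (pow_le_pow_left₀ ha.le hat 2)

/-- Optimality computation for the beam-splitter: for `η ∈ [0,1]` and `a, b > 0`, the
6×6 covariance matrix `σ⁽ⁿ⁾` of the output state `γ⁽ⁿ⁾_{CA'B'}` satisfies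
`det σ⁽ⁿ⁾ · (ab)² / (n⁸(ηa + (1-η)b)²) → 1` as `n → ∞`. -/
theorem beam_splitter_optimality_det (η a b : ℝ) (hη : η ∈ Set.Icc (0:ℝ) 1)
    (ha : 0 < a) (hb : 0 < b) :
    Tendsto (fun n : ℕ =>
      (!![(n:ℝ)^2*(η/a + (1-η)/b), 0, (n:ℝ)*Real.sqrt (η*((n:ℝ)^2/a^2 - 1)), 0,
            (n:ℝ)*Real.sqrt ((1-η)*((n:ℝ)^2/b^2 - 1)), 0;
          0, (n:ℝ)^2*(η/a + (1-η)/b), 0, -((n:ℝ)*Real.sqrt (η*((n:ℝ)^2/a^2 - 1))), 0,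
            -((n:ℝ)*Real.sqrt ((1-η)*((n:ℝ)^2/b^2 - 1)));
          (n:ℝ)*Real.sqrt (η*((n:ℝ)^2/a^2 - 1)), 0, (n:ℝ)^2/a, 0, 0, 0;
          0, -((n:ℝ)*Real.sqrt (η*((n:ℝ)^2/a^2 - 1))), 0, (n:ℝ)^2/a, 0, 0;
          (n:ℝ)*Real.sqrt ((1-η)*((n:ℝ)^2/b^2 - 1)), 0, 0, 0, (n:ℝ)^2/b, 0;
          0, -((n:ℝ)*Real.sqrt ((1-η)*((n:ℝ)^2/b^2 - 1))), 0, 0, 0, (n:ℝ)^2/b]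
        : Matrix (Fin 6) (Fin 6) ℝ).det
        * (a*b)^2 / ((n:ℝ)^8 * (η*a + (1-η)*b)^2))
      atTop (nhds 1) := by
  obtain ⟨hη0, hη1⟩ := hη
  have hmix : 0 < η * a + (1 - η) * b := by
    rcases hη0.eq_or_lt with rfl | hη0
    · simpa using hb
    · nlinarith [mul_pos hη0 ha, mul_nonneg (sub_nonneg.2 hη1) hb.le]
  refine tendsto_const_nhds.congr' ?_
  filter_upwards [tendsto_natCast_atTop_atTop.eventually_ge_atTop (max a b)] with n hn
  have hna : a ≤ n := le_of_max_le_left hn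
  have hnb : b ≤ n := le_of_max_le_right hn
  have hn0 : (n : ℝ) ≠ 0 := (ha.trans_le hna).ne'
  rw [det_fin_six_eq_sq_arrow_det, beamSplitter_arrow_det ha.ne' hb.ne'
    (mul_nonneg hη0 (sq_div_sq_sub_one_nonneg ha hna))
    (mul_nonneg (sub_nonneg.2 hη1) (sq_div_sq_sub_one_nonneg hb hnb))]
  field_simp
end
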